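/- Let $Z : (0,\infty) \to \mathbb{R}$ be measurable, and suppose there exist constants $0 \le d_\partial < d_f$, $d_w > 0$, $c_1, c_2 > 0$, and a measurable periodic function $G$ bounded above and below away from zero, such that for $0 < t < 1$: $c_1 t^{-d_\partial/d_w} \le t^{-d_f/d_w} G(\log(1/t)) - Z(t) \le c_2 t^{-d_\partial/d_w}$; and $|Z(t)| \le c_3 e^{-c_4 t}$ for $t \ge 1$ with $c_4 > 0$. Then for each $\gamma > -c_4$, the function $s \mapsto \int_0^\infty t^{s-1} Z(t) e^{-\gamma t}\, dt$, initially defined and analytic on $\{Re(s) > d_f/d_w\}$, admits a meromorphic continuation to $\{Re(s) > d_\partial/d_w\}$. -/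

import Mathlib

/-!
Put `a = d_f / d_w`, `b = d_∂ / d_w` and `q t = t ^ (-a) * G (log (1 / t))`. Periodicity of `G`
gives `q (e^P t) = e^(-P a) q t`, so splitting `(0, 1)` at `e^(-P)` shows that the Mellin transform
of `q` restricted to `(0, 1)` satisfies `(1 - e^((a - s) P)) M(s) = M₂(s)`, where `M₂` is the
(entire) Mellin transform of `q` restricted to `[e^(-P), 1)`; hence `M` is meromorphic on `ℂ`.
Expanding `e^(-γ t)` to an order `N ≥ a - b`, the function `Z t * e^(-γ t)` differs from
`∑_{n < N} (-γ)^n / n! * t^n * q t` (on `(0, 1)`) by a remainder that is `O(t^(-b))` at `0` and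
decays exponentially at `∞`, so its transform is holomorphic on `re s > b`, while the polynomial
part contributes the shifted transforms `M (s + n)`.
-/

open MeasureTheory Complex Set
open Filter Asymptotics Topology

theorem locallyIntegrableOn_of_norm_le_of_continuousOn {X E : Type*} [TopologicalSpace X]
    [MeasurableSpace X] [OpensMeasurableSpace X] [LocallyCompactSpace X] [T2Space X]
    [NormedAddCommGroup E] {μ : Measure X} [IsLocallyFiniteMeasure μ] {s : Set X}
    {f : X → E} {g : X → ℝ} (hs : IsLocallyClosed s) (hf : AEStronglyMeasurable f μ)
    (hg : ContinuousOn g s) (hfg : ∀ x ∈ s, ‖f x‖ ≤ g x) : LocallyIntegrableOn f s μ :=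
  (locallyIntegrableOn_iff hs).2 fun _ hks hk =>
    Integrable.mono' ((hg.mono hks).integrableOn_compact hk) hf.restrict
      (ae_restrict_of_forall_mem hk.measurableSet fun x hx => hfg x (hks hx))

theorem isBigO_rpow_rpow_nhdsGT_zero {p q : ℝ} (hpq : p ≤ q) :
    (fun t : ℝ => t ^ q) =O[𝓝[>] 0] fun t => t ^ p :=
  IsBigO.of_bound 1 <| eventually_of_mem (Ioo_mem_nhdsGT one_pos) fun t ht => by
    rw [one_mul, Real.norm_of_nonneg (Real.rpow_nonneg ht.1.le _),
      Real.norm_of_nonneg (Real.rpow_nonneg ht.1.le _)]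
    exact Real.rpow_le_rpow_of_exponent_ge ht.1 ht.2.le hpq

section Indicator

variable {E : Type*} [NormedAddCommGroup E] {q : ℝ → E} {S : Set ℝ} {a C : ℝ}

theorem norm_indicator_le_rpow (hbound : ∀ t ∈ S, ‖q t‖ ≤ C * t ^ (-a)) {t : ℝ} (ht : 0 < t) :
    ‖S.indicator q t‖ ≤ |C| * t ^ (-a) := by
  by_cases htS : t ∈ S
  · rw [indicator_of_mem htS]
    exact (hbound t htS).trans (mul_le_mul_of_nonneg_right (le_abs_self C) (by positivity))
  · rw [indicator_of_notMem htS, norm_zero]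
    positivity

theorem locallyIntegrableOn_indicator_of_norm_le_rpow (hS : MeasurableSet S)
    (hq : AEStronglyMeasurable q) (hbound : ∀ t ∈ S, ‖q t‖ ≤ C * t ^ (-a)) :
    LocallyIntegrableOn (S.indicator q) (Ioi 0) :=
  locallyIntegrableOn_of_norm_le_of_continuousOn isOpen_Ioi.isLocallyClosed (hq.indicator hS)
    (fun t ht => ((Real.continuousAt_rpow_const t _ (Or.inl (ne_of_gt ht))).const_mul _)
      |>.continuousWithinAt)
    fun _ ht => norm_indicator_le_rpow hbound ht

theorem indicator_isBigO_rpow_nhdsGT_zero (hbound : ∀ t ∈ S, ‖q t‖ ≤ C * t ^ (-a)) :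
    S.indicator q =O[𝓝[>] 0] (· ^ (-a)) :=
  IsBigO.of_bound |C| <| eventually_mem_nhdsWithin.mono fun t ht => by
    rw [Real.norm_of_nonneg (Real.rpow_nonneg (le_of_lt ht) _)]
    exact norm_indicator_le_rpow hbound ht

theorem indicator_eventuallyEq_zero_atTop (hS : S ⊆ Iio 1) : S.indicator q =ᶠ[atTop] 0 :=
  (eventually_ge_atTop 1).mono fun _ ht => indicator_of_notMem (fun h => not_lt.2 ht (hS h)) _

variable [NormedSpace ℂ E]

theorem mellinConvergent_indicator_of_norm_le_rpow (hS : MeasurableSet S) (hS1 : S ⊆ Iio 1)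
    (hq : AEStronglyMeasurable q) (hbound : ∀ t ∈ S, ‖q t‖ ≤ C * t ^ (-a)) {s : ℂ}
    (hs : a < s.re) : MellinConvergent (S.indicator q) s :=
  mellinConvergent_of_isBigO_rpow (locallyIntegrableOn_indicator_of_norm_le_rpow hS hq hbound)
    ((indicator_eventuallyEq_zero_atTop hS1).trans_isBigO (isBigO_zero _ _)) (lt_add_one s.re)
    (indicator_isBigO_rpow_nhdsGT_zero hbound) hs

theorem differentiableAt_mellin_indicator_of_norm_le_rpow
    (hS : MeasurableSet S) (hS1 : S ⊆ Iio 1) (hq : AEStronglyMeasurable q)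
    (hbound : ∀ t ∈ S, ‖q t‖ ≤ C * t ^ (-a)) {s : ℂ} (hs : a < s.re) :
    DifferentiableAt ℂ (mellin (S.indicator q)) s :=
  mellin_differentiableAt_of_isBigO_rpow
    (locallyIntegrableOn_indicator_of_norm_le_rpow hS hq hbound)
    ((indicator_eventuallyEq_zero_atTop hS1).trans_isBigO (isBigO_zero _ _)) (lt_add_one s.re)
    (indicator_isBigO_rpow_nhdsGT_zero hbound) hs

theorem differentiable_mellin_indicator_Ico {c : ℝ} (hc : 0 < c)
    (hq : AEStronglyMeasurable q) (hbound : ∀ t ∈ Ico c 1, ‖q t‖ ≤ C * t ^ (-a)) :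
    Differentiable ℂ (mellin ((Ico c 1).indicator q)) := fun s =>
  mellin_differentiableAt_of_isBigO_rpow (b := s.re - 1)
    (locallyIntegrableOn_indicator_of_norm_le_rpow measurableSet_Ico hq hbound)
    ((indicator_eventuallyEq_zero_atTop fun _ ht => ht.2).trans_isBigO (isBigO_zero _ _))
    (lt_add_one s.re)
    (EventuallyEq.trans_isBigO (eventually_of_mem (Ioo_mem_nhdsGT hc) fun _ ht =>
      indicator_of_notMem (fun h => not_le.2 ht.2 h.1) _) (isBigO_zero _ _))
    (sub_one_lt s.re)

end Indicator

section Sums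

variable {E : Type*} [NormedAddCommGroup E] [NormedSpace ℂ E]

theorem hasMellin_sum {ι : Type*} (u : Finset ι) {f : ι → ℝ → E} {m : ι → E} {s : ℂ}
    (hf : ∀ i ∈ u, HasMellin (f i) s (m i)) :
    HasMellin (fun t => ∑ i ∈ u, f i t) s (∑ i ∈ u, m i) := by
  classical
  induction u using Finset.induction_on with
  | empty => simp [HasMellin, MellinConvergent, mellin]
  | insert i u hi ih =>
    obtain ⟨hconv, hval⟩ := ih fun j hj => hf j (Finset.mem_insert_of_mem hj)
    obtain ⟨hconv_i, hval_i⟩ := hf i (Finset.mem_insert_self i u)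
    simpa only [Finset.sum_insert hi, hval, hval_i] using hasMellin_add hconv_i hconv

theorem hasMellin_sum_pow_smul (f : ℝ → E) (c : ℕ → ℂ) (N : ℕ) {s : ℂ}
    (hf : ∀ n < N, MellinConvergent f (s + n)) :
    HasMellin (fun t : ℝ => (∑ n ∈ Finset.range N, c n * (t : ℂ) ^ n) • f t) s
      (∑ n ∈ Finset.range N, c n • mellin f (s + n)) := by
  have hterm (n : ℕ) (hn : n ∈ Finset.range N) :
      HasMellin (fun t : ℝ => c n • (t : ℂ) ^ (n : ℂ) • f t) s (c n • mellin f (s + n)) := by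
    have := hasMellin_const_smul (MellinConvergent.cpow_smul.2 (hf n (Finset.mem_range.1 hn))) (c n)
    rwa [mellin_cpow_smul] at this
  simpa only [Finset.sum_smul, mul_smul, cpow_natCast] using hasMellin_sum _ hterm

end Sums

section SelfSimilar

variable {E : Type*} [NormedAddCommGroup E] [NormedSpace ℂ E] {q : ℝ → E} {a C r : ℝ}

theorem indicator_Ioo_zero_one_eq (hr : 1 < r)
    (hscale : ∀ t, 0 < t → q (r * t) = r ^ (-a) • q t) (t : ℝ) :
    (Ioo 0 1).indicator q t =
      r ^ a • (Ioo 0 1).indicator q (r * t) + (Ico r⁻¹ 1).indicator q t := by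
  have hr0 : 0 < r := one_pos.trans hr
  have hr1 : r⁻¹ < 1 := inv_lt_one_of_one_lt₀ hr
  have hrt : r * t < 1 ↔ t < r⁻¹ := by rw [← lt_inv_mul_iff₀ hr0, mul_one]
  simp only [indicator_apply, mem_Ioo, mem_Ico, hrt, mul_pos_iff_of_pos_left hr0]
  split_ifs with h₁ h₂ h₃ h₃ h₂ h₃ h₃
  · exact absurd h₃.1 (not_le.2 h₂.2)
  · rw [hscale t h₂.1, smul_smul, ← Real.rpow_add hr0, add_neg_cancel, Real.rpow_zero, one_smul,
      add_zero]
  · rw [smul_zero, zero_add]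
  · exact absurd ⟨le_of_not_gt fun h => h₂ ⟨h₁.1, h⟩, h₁.2⟩ h₃
  · exact absurd ⟨h₂.1, h₂.2.trans hr1⟩ h₁
  · exact absurd ⟨h₂.1, h₂.2.trans hr1⟩ h₁
  · exact absurd ⟨(inv_pos.2 hr0).trans_le h₃.1, h₃.2⟩ h₁
  · rw [smul_zero, add_zero]

theorem ofReal_cpow_sub_ne_one (hr : 1 < r) {s : ℂ} (hs : a < s.re) :
    (r : ℂ) ^ ((a : ℂ) - s) ≠ 1 := by
  intro h
  have := congrArg norm h
  rw [norm_cpow_eq_rpow_re_of_pos (one_pos.trans hr), norm_one, sub_re, ofReal_re] at this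
  exact (Real.rpow_lt_one_of_one_lt_of_neg hr (sub_neg.2 hs)).ne this

theorem mellin_indicator_Ioo_zero_one_eq (hr : 1 < r) (hq : AEStronglyMeasurable q)
    (hbound : ∀ t ∈ Ioo 0 1, ‖q t‖ ≤ C * t ^ (-a))
    (hscale : ∀ t, 0 < t → q (r * t) = r ^ (-a) • q t) {s : ℂ} (hs : a < s.re) :
    mellin ((Ioo 0 1).indicator q) s =
      (1 - (r : ℂ) ^ ((a : ℂ) - s))⁻¹ • mellin ((Ico r⁻¹ 1).indicator q) s := by
  have hr0 : 0 < r := one_pos.trans hr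
  have hf₁ : MellinConvergent ((Ioo 0 1).indicator q) s :=
    mellinConvergent_indicator_of_norm_le_rpow measurableSet_Ioo (fun _ ht => ht.2) hq hbound hs
  have hf₂ : MellinConvergent ((Ico r⁻¹ 1).indicator q) s :=
    mellinConvergent_indicator_of_norm_le_rpow measurableSet_Ico (fun _ ht => ht.2) hq
      (fun t ht => hbound t ⟨(inv_pos.2 hr0).trans_le ht.1, ht.2⟩) hs
  have hsplit := (hasMellin_add (((MellinConvergent.comp_mul_left hr0).2 hf₁).const_smul (r ^ a))
    hf₂).2
  rw [← funext (indicator_Ioo_zero_one_eq hr hscale), mellin_const_smul,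
    mellin_comp_mul_left _ _ hr0, ← Complex.coe_smul, smul_smul, ofReal_cpow hr0.le,
    ← cpow_add _ _ (ofReal_ne_zero.2 hr0.ne'), ← sub_eq_add_neg] at hsplit
  rw [eq_inv_smul_iff₀ (sub_ne_zero.2 (ofReal_cpow_sub_ne_one hr hs).symm), sub_smul, one_smul,
    sub_eq_iff_eq_add']
  exact hsplit

theorem exists_meromorphic_eq_mellin_indicator_Ioo_zero_one [CompleteSpace E] (hr : 1 < r)
    (hq : AEStronglyMeasurable q) (hbound : ∀ t ∈ Ioo 0 1, ‖q t‖ ≤ C * t ^ (-a))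
    (hscale : ∀ t, 0 < t → q (r * t) = r ^ (-a) • q t) :
    ∃ h : ℂ → E, Meromorphic h ∧ ∀ s : ℂ, a < s.re → mellin ((Ioo 0 1).indicator q) s = h s := by
  have hr0 : 0 < r := one_pos.trans hr
  refine ⟨fun s => (1 - (r : ℂ) ^ ((a : ℂ) - s))⁻¹ • mellin ((Ico r⁻¹ 1).indicator q) s,
    fun x => ?_, fun s hs => mellin_indicator_Ioo_zero_one_eq hr hq hbound hscale hs⟩
  have hden : AnalyticAt ℂ (fun s : ℂ => 1 - (r : ℂ) ^ ((a : ℂ) - s)) x :=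
    (by fun_prop (disch := simp [hr0.ne']) : Differentiable ℂ _).analyticAt x
  have hnum := (differentiable_mellin_indicator_Ico (inv_pos.2 hr0) hq
    fun t ht => hbound t ⟨(inv_pos.2 hr0).trans_le ht.1, ht.2⟩).analyticAt x
  exact hden.meromorphicAt.inv.smul hnum.meromorphicAt

end SelfSimilar

section Continuation

variable {E : Type*} [NormedAddCommGroup E] [NormedSpace ℂ E] {q f : ℝ → E}
  {a b C κ : ℝ} {c : ℕ → ℂ} {N : ℕ}

theorem mellinConvergent_and_differentiableAt_mellin_sub_sum_pow_smul (hq : AEStronglyMeasurable q)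
    (hbound : ∀ t ∈ Ioo 0 1, ‖q t‖ ≤ C * t ^ (-a)) (hκ : 0 < κ)
    (hf : LocallyIntegrableOn f (Ioi 0)) (hf_top : f =O[atTop] fun t => Real.exp (-κ * t))
    (hf_bot : (fun t => f t - (∑ n ∈ Finset.range N, c n * (t : ℂ) ^ n) • q t)
      =O[𝓝[>] 0] (· ^ (-b))) {s : ℂ} (hs : b < s.re) :
    MellinConvergent
        (fun t => f t - (∑ n ∈ Finset.range N, c n * (t : ℂ) ^ n) • (Ioo 0 1).indicator q t) s ∧
      DifferentiableAt ℂ (mellin fun t =>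
        f t - (∑ n ∈ Finset.range N, c n * (t : ℂ) ^ n) • (Ioo 0 1).indicator q t) s := by
  set R : ℝ → E :=
    fun t => f t - (∑ n ∈ Finset.range N, c n * (t : ℂ) ^ n) • (Ioo 0 1).indicator q t
  have h_loc : LocallyIntegrableOn R (Ioi 0) :=
    hf.sub ((locallyIntegrableOn_indicator_of_norm_le_rpow measurableSet_Ioo hq hbound)
      |>.continuousOn_smul isOpen_Ioi.isLocallyClosed (by fun_prop))
  have h_top : R =O[atTop] fun t => Real.exp (-κ * t) :=
    hf_top.sub <| EventuallyEq.trans_isBigO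
      ((indicator_eventuallyEq_zero_atTop (S := Ioo 0 1) (q := q) fun _ ht => ht.2).mono
        fun t ht => by simp only [ht, Pi.zero_apply, smul_zero]) (isBigO_zero _ _)
  have h_bot : R =O[𝓝[>] 0] (· ^ (-b)) :=
    hf_bot.congr' (eventually_of_mem (Ioo_mem_nhdsGT one_pos) fun t ht => by
      simp [R, indicator_of_mem ht]) EventuallyEq.rfl
  exact ⟨mellinConvergent_of_isBigO_rpow_exp hκ h_loc h_top h_bot hs,
    mellin_differentiableAt_of_isBigO_rpow_exp hκ h_loc h_top h_bot hs⟩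

theorem mellin_continuation_of_isBigO_sub_sum_pow_smul [CompleteSpace E] {r : ℝ} (hr : 1 < r)
    (hq : AEStronglyMeasurable q) (hbound : ∀ t ∈ Ioo 0 1, ‖q t‖ ≤ C * t ^ (-a))
    (hscale : ∀ t, 0 < t → q (r * t) = r ^ (-a) • q t) (hba : b ≤ a) (hκ : 0 < κ)
    (hf : LocallyIntegrableOn f (Ioi 0)) (hf_top : f =O[atTop] fun t => Real.exp (-κ * t))
    (hf_bot : (fun t => f t - (∑ n ∈ Finset.range N, c n * (t : ℂ) ^ n) • q t)
      =O[𝓝[>] 0] (· ^ (-b))) :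
    DifferentiableOn ℂ (mellin f) {s | a < s.re} ∧
      ∃ g : ℂ → E, MeromorphicOn g {s | b < s.re} ∧ ∀ s : ℂ, a < s.re → g s = mellin f s := by
  set f₁ := (Ioo (0 : ℝ) 1).indicator q
  set R : ℝ → E := fun t => f t - (∑ n ∈ Finset.range N, c n * (t : ℂ) ^ n) • f₁ t
  have hR {s : ℂ} (hs : b < s.re) := mellinConvergent_and_differentiableAt_mellin_sub_sum_pow_smul
    hq hbound hκ hf hf_top hf_bot hs
  have hshift {s : ℂ} (hs : a < s.re) (n : ℕ) : a < (s + n).re := by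
    simpa using hs.trans_le (le_add_of_nonneg_right n.cast_nonneg)
  have hdecomp {s : ℂ} (hs : a < s.re) :
      mellin f s = ∑ n ∈ Finset.range N, c n • mellin f₁ (s + n) + mellin R s := by
    have hP := hasMellin_sum_pow_smul f₁ c N fun n _ =>
      mellinConvergent_indicator_of_norm_le_rpow measurableSet_Ioo (fun _ ht => ht.2) hq hbound
        (hshift hs n)
    have := hasMellin_add hP.1 (hR (hba.trans_lt hs)).1
    simp only [f₁, add_sub_cancel] at this
    rw [this.2, hP.2]
  obtain ⟨h, hh, hh_eq⟩ := exists_meromorphic_eq_mellin_indicator_Ioo_zero_one hr hq hbound hscale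
  refine ⟨?_, fun s => ∑ n ∈ Finset.range N, c n • h (s + n) + mellin R s, fun x hx => ?_,
    fun s hs => ?_⟩
  · refine DifferentiableOn.congr (fun s hs => DifferentiableAt.differentiableWithinAt ?_)
      fun s hs => hdecomp hs
    refine (DifferentiableAt.fun_sum fun n _ => DifferentiableAt.const_smul ?_ (c n)).add
      (hR (hba.trans_lt hs)).2
    have : DifferentiableAt ℂ (mellin f₁) (s + n) :=
      differentiableAt_mellin_indicator_of_norm_le_rpow measurableSet_Ioo (fun _ ht => ht.2) hq
        hbound (hshift hs n)
    exact DifferentiableAt.comp (g := mellin f₁) s this (differentiableAt_id.add_const (n : ℂ))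
  · have hR_an : AnalyticAt ℂ (mellin R) x :=
      DifferentiableOn.analyticAt (fun s hs => (hR hs).2.differentiableWithinAt)
        ((isOpen_lt continuous_const continuous_re).mem_nhds hx)
    exact (MeromorphicAt.fun_sum fun n _ => (MeromorphicAt.const (c n) x).smul
      ((hh _).comp_analyticAt (by fun_prop))).add hR_an.meromorphicAt
  · rw [hdecomp hs]
    exact congrArg (· + mellin R s)
      (Finset.sum_congr rfl fun n _ => by rw [hh_eq _ (hshift hs n)])

end Continuation

theorem exp_sub_sum_range_isBigO_pow_nhdsGT_zero (γ : ℝ) (N : ℕ) :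
    (fun t : ℝ => Real.exp (-γ * t) - ∑ n ∈ Finset.range N, (-γ * t) ^ n / n.factorial)
      =O[𝓝[>] 0] (· ^ N) := by
  have hlim : Tendsto (fun t : ℝ => -γ * t) (𝓝[>] 0) (𝓝 0) :=
    ((continuous_const_mul (-γ)).tendsto' 0 0 (mul_zero _)).mono_left nhdsWithin_le_nhds
  refine ((Real.exp_sub_sum_range_isBigO_pow N).comp_tendsto hlim).trans ?_
  simpa only [Function.comp_def, mul_pow] using (isBigO_refl (· ^ N) _).const_mul_left ((-γ) ^ N)

noncomputable def leadingTerm (G : ℝ → ℝ) (a t : ℝ) : ℝ := t ^ (-a) * G (Real.log (1 / t))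

section LeadingTerm

variable {G : ℝ → ℝ} {a : ℝ}

theorem leadingTerm_exp_mul {P t : ℝ} (hG : Function.Periodic G P) (ht : 0 < t) :
    leadingTerm G a (Real.exp P * t) = Real.exp P ^ (-a) * leadingTerm G a t := by
  have hlog : Real.log (1 / (Real.exp P * t)) = Real.log (1 / t) - P := by
    rw [one_div, one_div, Real.log_inv, Real.log_inv,
      Real.log_mul (Real.exp_ne_zero P) ht.ne', Real.log_exp]
    ring
  rw [leadingTerm, leadingTerm, Real.mul_rpow (Real.exp_pos P).le ht.le, hlog, hG.sub_eq,
    mul_assoc]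

theorem abs_leadingTerm_le {K t : ℝ} (hK : ∀ x, |G x| ≤ K) (ht : 0 < t) :
    |leadingTerm G a t| ≤ K * t ^ (-a) := by
  rw [leadingTerm, abs_mul, abs_of_pos (Real.rpow_pos_of_pos ht _), mul_comm]
  exact mul_le_mul_of_nonneg_right (hK _) (Real.rpow_nonneg ht.le _)

theorem measurable_leadingTerm (hG : Measurable G) : Measurable (leadingTerm G a) := by
  unfold leadingTerm
  fun_prop

end LeadingTerm

section Damped

variable {Z q : ℝ → ℝ} {a b K K' c₃ c₄ : ℝ}

theorem abs_le_rpow_add_rpow_add_exp (hq : ∀ t, 0 < t → |q t| ≤ K * t ^ (-a))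
    (hqZ : ∀ t ∈ Ioo 0 1, |q t - Z t| ≤ K' * t ^ (-b))
    (hlarge : ∀ t, 1 ≤ t → |Z t| ≤ c₃ * Real.exp (-c₄ * t)) {t : ℝ} (ht : 0 < t) :
    |Z t| ≤ |K| * t ^ (-a) + |K'| * t ^ (-b) + |c₃| * Real.exp (-c₄ * t) := by
  have h₁ : K * t ^ (-a) ≤ |K| * t ^ (-a) := by gcongr; exact le_abs_self K
  have h₂ : K' * t ^ (-b) ≤ |K'| * t ^ (-b) := by gcongr; exact le_abs_self K'
  have h₃ : c₃ * Real.exp (-c₄ * t) ≤ |c₃| * Real.exp (-c₄ * t) := by gcongr; exact le_abs_self c₃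
  have : 0 ≤ |K| * t ^ (-a) := by positivity
  have : 0 ≤ |K'| * t ^ (-b) := by positivity
  have : 0 ≤ |c₃| * Real.exp (-c₄ * t) := by positivity
  rcases lt_or_ge t 1 with ht1 | ht1
  · linarith [hq t ht, hqZ t ⟨ht, ht1⟩, abs_sub_abs_le_abs_sub (Z t) (q t),
      abs_sub_comm (Z t) (q t)]
  · linarith [hlarge t ht1]

theorem locallyIntegrableOn_mul_exp (γ : ℝ) (hZ : Measurable Z)
    (hq : ∀ t, 0 < t → |q t| ≤ K * t ^ (-a)) (hqZ : ∀ t ∈ Ioo 0 1, |q t - Z t| ≤ K' * t ^ (-b))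
    (hlarge : ∀ t, 1 ≤ t → |Z t| ≤ c₃ * Real.exp (-c₄ * t)) :
    LocallyIntegrableOn (fun t => (Z t : ℂ) * Real.exp (-γ * t)) (Ioi 0) := by
  have hg : ContinuousOn (fun t => (|K| * t ^ (-a) + |K'| * t ^ (-b) +
      |c₃| * Real.exp (-c₄ * t)) * Real.exp (-γ * t)) (Ioi 0) := by
    fun_prop (disch := simp_all [ne_of_gt])
  refine locallyIntegrableOn_of_norm_le_of_continuousOn isOpen_Ioi.isLocallyClosed
    (by fun_prop : Measurable _).aestronglyMeasurable hg fun t ht => ?_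
  rw [norm_mul, norm_real, norm_real, Real.norm_eq_abs, Real.norm_of_nonneg (Real.exp_pos _).le]
  exact mul_le_mul_of_nonneg_right (abs_le_rpow_add_rpow_add_exp hq hqZ hlarge ht)
    (Real.exp_pos _).le

theorem mul_exp_isBigO_atTop (γ : ℝ) (hlarge : ∀ t, 1 ≤ t → |Z t| ≤ c₃ * Real.exp (-c₄ * t)) :
    (fun t => (Z t : ℂ) * Real.exp (-γ * t)) =O[atTop] fun t => Real.exp (-(c₄ + γ) * t) :=
  IsBigO.of_bound c₃ <| (eventually_ge_atTop 1).mono fun t ht => by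
    rw [norm_mul, norm_real, norm_real, Real.norm_eq_abs, Real.norm_of_nonneg (Real.exp_pos _).le,
      Real.norm_of_nonneg (Real.exp_pos _).le, neg_add, add_mul, Real.exp_add, ← mul_assoc]
    exact mul_le_mul_of_nonneg_right (hlarge t ht) (Real.exp_pos _).le

theorem mul_exp_sub_isBigO_rpow (γ : ℝ) {N : ℕ} (hq : ∀ t, 0 < t → |q t| ≤ K * t ^ (-a))
    (hqZ : ∀ t ∈ Ioo 0 1, |q t - Z t| ≤ K' * t ^ (-b)) (hN : a - b ≤ N) :
    (fun t => (Z t : ℂ) * Real.exp (-γ * t) -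
      (∑ n ∈ Finset.range N, (-γ : ℂ) ^ n / n.factorial * (t : ℂ) ^ n) • (q t : ℂ))
      =O[𝓝[>] 0] (· ^ (-b)) := by
  have hq' : q =O[𝓝[>] 0] (· ^ (-a)) :=
    IsBigO.of_bound K <| eventually_mem_nhdsWithin.mono fun t ht => by
      rw [Real.norm_eq_abs, Real.norm_of_nonneg (Real.rpow_nonneg (le_of_lt ht) _)]
      exact hq t ht
  have hqZ' : (fun t => q t - Z t) =O[𝓝[>] 0] (· ^ (-b)) :=
    IsBigO.of_bound K' <| eventually_of_mem (Ioo_mem_nhdsGT one_pos) fun t ht => by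
      rw [Real.norm_eq_abs, Real.norm_of_nonneg (Real.rpow_nonneg ht.1.le _)]
      exact hqZ t ht
  have hexp : (fun t : ℝ => Real.exp (-γ * t)) =O[𝓝[>] 0] fun _ => (1 : ℝ) :=
    ((by fun_prop : Continuous fun t : ℝ => Real.exp (-γ * t)).tendsto 0).mono_left
      nhdsWithin_le_nhds |>.isBigO_one ℝ
  have hpow : (fun t : ℝ => t ^ (-a) * t ^ N) =O[𝓝[>] 0] (· ^ (-b)) :=
    (isBigO_rpow_rpow_nhdsGT_zero (by linarith : -b ≤ -a + N)).congr'
      (eventually_mem_nhdsWithin.mono fun t ht => by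
        dsimp only
        rw [Real.rpow_add ht, Real.rpow_natCast]) EventuallyEq.rfl
  have hreal := ((hq'.mul (exp_sub_sum_range_isBigO_pow_nhdsGT_zero γ N)).trans hpow).sub
    ((hqZ'.mul hexp).trans (by simpa only [mul_one] using isBigO_refl _ _))
  refine (isBigO_ofReal_left.2 hreal).congr_left fun t => ?_
  push_cast
  simp only [smul_eq_mul, mul_pow, div_mul_eq_mul_div, mul_div_assoc]
  ring_nf

end Damped

theorem stmt_13_general (Z : ℝ → ℝ) (hZm : Measurable Z)
    (d_bd d_f d_w c₁ c₂ c₃ c₄ : ℝ)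
    (hdf : d_bd < d_f) (hdw : 0 < d_w)
    (G : ℝ → ℝ) (hGm : Measurable G) (P : ℝ) (hP : 0 < P)
    (hGper : Function.Periodic G P)
    (m M : ℝ) (hG : ∀ x : ℝ, m ≤ G x ∧ G x ≤ M)
    (hsmall : ∀ t ∈ Ioo (0 : ℝ) 1,
      c₁ * t ^ (-(d_bd / d_w)) ≤ t ^ (-(d_f / d_w)) * G (Real.log (1 / t)) - Z t ∧
      t ^ (-(d_f / d_w)) * G (Real.log (1 / t)) - Z t ≤ c₂ * t ^ (-(d_bd / d_w)))
    (hlarge : ∀ t : ℝ, 1 ≤ t → |Z t| ≤ c₃ * Real.exp (-c₄ * t))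
    (γ : ℝ) (hγ : -c₄ < γ) :
    DifferentiableOn ℂ
      (fun s : ℂ => ∫ t in Ioi (0 : ℝ),
        (t : ℂ) ^ (s - 1) * (Z t : ℂ) * (Real.exp (-γ * t) : ℂ))
      {s : ℂ | d_f / d_w < s.re} ∧
    ∃ g : ℂ → ℂ,
      MeromorphicOn g {s : ℂ | d_bd / d_w < s.re} ∧
      ∀ s : ℂ, d_f / d_w < s.re →
        g s = ∫ t in Ioi (0 : ℝ),
          (t : ℂ) ^ (s - 1) * (Z t : ℂ) * (Real.exp (-γ * t) : ℂ) := by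
  set a := d_f / d_w
  set b := d_bd / d_w
  obtain ⟨K, hK⟩ : ∃ K, ∀ x, |G x| ≤ K := ⟨_, fun x => abs_le_max_abs_abs (hG x).1 (hG x).2⟩
  have hq (t : ℝ) (ht : 0 < t) : |leadingTerm G a t| ≤ K * t ^ (-a) := abs_leadingTerm_le hK ht
  have hqZ : ∀ t ∈ Ioo (0 : ℝ) 1, |leadingTerm G a t - Z t| ≤ max |c₁| |c₂| * t ^ (-b) :=
    fun t ht => (abs_le_max_abs_abs (hsmall t ht).1 (hsmall t ht).2).trans_eq <| by
      rw [abs_mul, abs_mul, abs_of_pos (Real.rpow_pos_of_pos ht.1 _), max_mul_of_nonneg _ _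
        (Real.rpow_pos_of_pos ht.1 _).le]
  have hmellin (s : ℂ) : ∫ t in Ioi (0 : ℝ), (t : ℂ) ^ (s - 1) * (Z t : ℂ) *
      (Real.exp (-γ * t) : ℂ) = mellin (fun t => (Z t : ℂ) * Real.exp (-γ * t)) s := by
    simp only [mellin, smul_eq_mul, mul_assoc]
  simp only [hmellin]
  exact mellin_continuation_of_isBigO_sub_sum_pow_smul (q := fun t => (leadingTerm G a t : ℂ))
    (Real.one_lt_exp_iff.2 hP)
    (measurable_ofReal.comp (measurable_leadingTerm hGm)).aestronglyMeasurable
    (fun t ht => (norm_real _).trans_le (hq t ht.1))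
    (fun t ht => by simp only [leadingTerm_exp_mul hGper ht, ofReal_mul, real_smul])
    (div_le_div_of_nonneg_right hdf.le hdw.le) (by linarith)
    (locallyIntegrableOn_mul_exp γ hZm hq hqZ hlarge) (mul_exp_isBigO_atTop γ hlarge)
    (mul_exp_sub_isBigO_rpow γ hq hqZ (Nat.le_ceil (a - b)))

/-- Lemma 1 of the paper: the Mellin transform of the partition function,
analytic for `Re s > d_f / d_w`, admits a meromorphic continuation to
`Re s > d_∂ / d_w`. -/
theorem stmt_13 (Z : ℝ → ℝ) (hZm : Measurable Z)
    (d_bd d_f d_w c₁ c₂ c₃ c₄ : ℝ)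
    (hbd : 0 ≤ d_bd) (hdf : d_bd < d_f) (hdw : 0 < d_w)
    (hc₁ : 0 < c₁) (hc₂ : 0 < c₂) (hc₄ : 0 < c₄)
    (G : ℝ → ℝ) (hGm : Measurable G) (P : ℝ) (hP : 0 < P)
    (hGper : Function.Periodic G P)
    (m M : ℝ) (hm : 0 < m) (hG : ∀ x : ℝ, m ≤ G x ∧ G x ≤ M)
    (hsmall : ∀ t ∈ Ioo (0 : ℝ) 1,
      c₁ * t ^ (-(d_bd / d_w)) ≤ t ^ (-(d_f / d_w)) * G (Real.log (1 / t)) - Z t ∧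
      t ^ (-(d_f / d_w)) * G (Real.log (1 / t)) - Z t ≤ c₂ * t ^ (-(d_bd / d_w)))
    (hlarge : ∀ t : ℝ, 1 ≤ t → |Z t| ≤ c₃ * Real.exp (-c₄ * t))
    (γ : ℝ) (hγ : -c₄ < γ) :
    DifferentiableOn ℂ
      (fun s : ℂ => ∫ t in Ioi (0 : ℝ),
        (t : ℂ) ^ (s - 1) * (Z t : ℂ) * (Real.exp (-γ * t) : ℂ))
      {s : ℂ | d_f / d_w < s.re} ∧
    ∃ g : ℂ → ℂ,
      MeromorphicOn g {s : ℂ | d_bd / d_w < s.re} ∧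
      ∀ s : ℂ, d_f / d_w < s.re →
        g s = ∫ t in Ioi (0 : ℝ),
          (t : ℂ) ^ (s - 1) * (Z t : ℂ) * (Real.exp (-γ * t) : ℂ) :=
  stmt_13_general Z hZm d_bd d_f d_w c₁ c₂ c₃ c₄ hdf hdw G hGm P hP hGper m M hG hsmall hlarge γ hγ
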